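/- Let L, L' be weak left cells of a pretriangulated dg 2-category with L ⪯_L L' (so R_{L'}^⪯ is a 2-subrepresentation of R_L^⪯). If I ∈ MaxSpec(R_L^⪯), then the restriction of I to R_{L'}^⪯ is either a maximal dg ideal of R_{L'}^⪯ or equal to all of R_{L'}^⪯. -/

import Mathlib

set_option linter.unusedVariables false
/-- A (simplified, ungraded) model of a differential graded category: a
preadditive category equipped with a square-zero additive differential `d` on
each Hom-space satisfying the Leibniz rule (the ℤ-grading and Koszul signs are
suppressed in this model). -/
structure DGCat where
  Obj : Type
  Hom : Obj → Obj → Type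
  homGroup : ∀ X Y, AddCommGroup (Hom X Y)
  id : ∀ X, Hom X X
  comp : ∀ {X Y Z}, Hom X Y → Hom Y Z → Hom X Z
  id_comp : ∀ {X Y} (f : Hom X Y), comp (id X) f = f
  comp_id : ∀ {X Y} (f : Hom X Y), comp f (id Y) = f
  assoc : ∀ {W X Y Z} (f : Hom W X) (g : Hom X Y) (h : Hom Y Z),
    comp (comp f g) h = comp f (comp g h)
  comp_add : ∀ {X Y Z} (f : Hom X Y) (g g' : Hom Y Z),
    comp f (g + g') = comp f g + comp f g'
  add_comp : ∀ {X Y Z} (f f' : Hom X Y) (g : Hom Y Z),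
    comp (f + f') g = comp f g + comp f' g
  d : ∀ {X Y}, Hom X Y → Hom X Y
  d_add : ∀ {X Y} (f g : Hom X Y), d (f + g) = d f + d g
  d_sq : ∀ {X Y} (f : Hom X Y), d (d f) = 0
  leibniz : ∀ {X Y Z} (f : Hom X Y) (g : Hom Y Z),
    d (comp f g) = comp (d f) g + comp f (d g)

attribute [instance] DGCat.homGroup

/-- A dg ideal of a dg category: a system of subgroups of the Hom-spaces closed
under pre- and post-composition with arbitrary morphisms and under the
differential. -/
structure DGIdeal (C : DGCat) where
  carrier : ∀ X Y : C.Obj, AddSubgroup (C.Hom X Y)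
  comp_mem_left : ∀ {X Y Z : C.Obj} (f : C.Hom X Y) {g : C.Hom Y Z},
    g ∈ carrier Y Z → C.comp f g ∈ carrier X Z
  comp_mem_right : ∀ {X Y Z : C.Obj} {f : C.Hom X Y} (g : C.Hom Y Z),
    f ∈ carrier X Y → C.comp f g ∈ carrier X Z
  d_mem : ∀ {X Y : C.Obj} {f : C.Hom X Y}, f ∈ carrier X Y → C.d f ∈ carrier X Y

/-- A dg functor between dg categories. -/
structure DGFun (C D : DGCat) where
  obj : C.Obj → D.Obj
  map : ∀ {X Y : C.Obj}, C.Hom X Y → D.Hom (obj X) (obj Y)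
  map_add : ∀ {X Y : C.Obj} (f g : C.Hom X Y), map (f + g) = map f + map g
  map_id : ∀ X : C.Obj, map (C.id X) = D.id (obj X)
  map_comp : ∀ {X Y Z : C.Obj} (f : C.Hom X Y) (g : C.Hom Y Z),
    map (C.comp f g) = D.comp (map f) (map g)
  map_d : ∀ {X Y : C.Obj} (f : C.Hom X Y), map (C.d f) = D.d (map f)

/-- A (pretriangulated) 2-representation of a dg 2-category, recorded through
its underlying data: a dg category `cat i` for each object `i`, and a dg
functor for each 1-morphism.  (`Mor i j` is the set of 1-morphisms `i → j` of
the acting dg 2-category.) -/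
structure TwoRep (ι : Type) (Mor : ι → ι → Type) where
  cat : ι → DGCat
  act : ∀ {i j : ι}, Mor i j → DGFun (cat i) (cat j)

/-- A dg ideal of a dg 2-representation: a dg ideal of each `cat i`, stable
under the action of all 1-morphisms. -/
structure RepIdeal {ι : Type} {Mor : ι → ι → Type} (M : TwoRep ι Mor) where
  ideal : ∀ i, DGIdeal (M.cat i)
  act_mem : ∀ {i j : ι} (F : Mor i j) {X Y : (M.cat i).Obj} {f : (M.cat i).Hom X Y},
    f ∈ (ideal i).carrier X Y →
      (M.act F).map f ∈ (ideal j).carrier ((M.act F).obj X) ((M.act F).obj Y)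

/-- The full dg subcategory of `C` on a set of objects `S`. -/
def DGCat.Full (C : DGCat) (S : Set C.Obj) : DGCat where
  Obj := ↥S
  Hom X Y := C.Hom X.1 Y.1
  homGroup X Y := C.homGroup X.1 Y.1
  id X := C.id X.1
  comp := fun {X Y Z} f g => C.comp f g
  id_comp := fun {X Y} f => C.id_comp f
  comp_id := fun {X Y} f => C.comp_id f
  assoc := fun {W X Y Z} f g h => C.assoc f g h
  comp_add := fun {X Y Z} f g g' => C.comp_add f g g'
  add_comp := fun {X Y Z} f f' g => C.add_comp f f' g
  d := fun {X Y} f => C.d f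
  d_add := fun {X Y} f g => C.d_add f g
  d_sq := fun {X Y} f => C.d_sq f
  leibniz := fun {X Y Z} f g => C.leibniz f g

/-- A family of object-sets, one in each `cat i`, closed under the action of
all 1-morphisms (the objects of a full dg 2-subrepresentation). -/
def ClosedUnderAct {ι : Type} {Mor : ι → ι → Type} (M : TwoRep ι Mor)
    (S : ∀ i, Set (M.cat i).Obj) : Prop :=
  ∀ {i j : ι} (F : Mor i j) (X : (M.cat i).Obj), X ∈ S i → (M.act F).obj X ∈ S j

/-- The full dg 2-subrepresentation of `M` on the objects `S`. -/
def TwoRep.Sub {ι : Type} {Mor : ι → ι → Type} (M : TwoRep ι Mor)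
    (S : ∀ i, Set (M.cat i).Obj) (hS : ClosedUnderAct M S) : TwoRep ι Mor where
  cat i := (M.cat i).Full (S i)
  act := fun {i j} F =>
    { obj := fun X => ⟨(M.act F).obj X.1, hS F X.1 X.2⟩
      map := fun {X Y} f => (M.act F).map f
      map_add := fun {X Y} f g => (M.act F).map_add f g
      map_id := fun X => (M.act F).map_id X.1
      map_comp := fun {X Y Z} f g => (M.act F).map_comp f g
      map_d := fun {X Y} f => (M.act F).map_d f }

/-- The restriction of a dg ideal of `M` to the full 2-subrepresentation on
`S` (denoted `I ∩ N` in the paper). -/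
def RepIdeal.restrict {ι : Type} {Mor : ι → ι → Type} {M : TwoRep ι Mor}
    (S : ∀ i, Set (M.cat i).Obj) (hS : ClosedUnderAct M S) (I : RepIdeal M) :
    RepIdeal (M.Sub S hS) where
  ideal i :=
    { carrier := fun X Y => (I.ideal i).carrier X.1 Y.1
      comp_mem_left := fun {X Y Z} f {g} hg => (I.ideal i).comp_mem_left f hg
      comp_mem_right := fun {X Y Z} {f} g hf => (I.ideal i).comp_mem_right g hf
      d_mem := fun {X Y} {f} hf => (I.ideal i).d_mem hf }
  act_mem := fun {i j} F {X Y} {f} hf => I.act_mem F hf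

/-- Containment of dg ideals of a 2-representation. -/
def RepIdeal.le {ι : Type} {Mor : ι → ι → Type} {M : TwoRep ι Mor}
    (I J : RepIdeal M) : Prop :=
  ∀ (i : ι) (X Y : (M.cat i).Obj), (I.ideal i).carrier X Y ≤ (J.ideal i).carrier X Y

/-- A dg ideal of a 2-representation is proper if it does not contain all
morphisms. -/
def RepIdeal.Proper {ι : Type} {Mor : ι → ι → Type} {M : TwoRep ι Mor}
    (I : RepIdeal M) : Prop :=
  ¬ ∀ (i : ι) (X Y : (M.cat i).Obj), (I.ideal i).carrier X Y = ⊤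

/-- A maximal (proper) dg ideal of a 2-representation: an element of
`MaxSpec`. -/
def RepIdeal.IsMaximal {ι : Type} {Mor : ι → ι → Type} {M : TwoRep ι Mor}
    (I : RepIdeal M) : Prop :=
  I.Proper ∧ ∀ J : RepIdeal M, J.Proper → I.le J → J.le I


section Extension

variable {ι : Type} {Mor : ι → ι → Type} {M : TwoRep ι Mor}
  (S : ∀ i, Set (M.cat i).Obj) (hS : ClosedUnderAct M S)
  (I : RepIdeal M) (J : RepIdeal (M.Sub S hS))

/-- Generators of the ideal of `M` generated by `I` and `J`. -/
def genSet (i : ι) (X Y : (M.cat i).Obj) : Set ((M.cat i).Hom X Y) :=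
  {f | f ∈ (I.ideal i).carrier X Y ∨
    ∃ (A B : (M.cat i).Obj) (hA : A ∈ S i) (hB : B ∈ S i)
      (a : (M.cat i).Hom X A) (j : (M.cat i).Hom A B) (b : (M.cat i).Hom B Y),
      j ∈ (J.ideal i).carrier ⟨A, hA⟩ ⟨B, hB⟩ ∧
      f = (M.cat i).comp a ((M.cat i).comp j b)}

/-- The ideal of `M` generated by `I` and `J`. -/
def extIdeal : RepIdeal M where
  ideal i :=
    { carrier := fun X Y => AddSubgroup.closure (genSet S hS I J i X Y)
      comp_mem_left := by
        intro X Y Z f g hg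
        have h : AddSubgroup.closure (genSet S hS I J i Y Z) ≤
            (AddSubgroup.closure (genSet S hS I J i X Z)).comap
              (AddMonoidHom.mk' (fun g => (M.cat i).comp f g)
                (fun a b => (M.cat i).comp_add f a b)) := by
          rw [AddSubgroup.closure_le]
          rintro g (hg | ⟨A, B, hA, hB, a, j, b, hj, rfl⟩) <;>
            refine AddSubgroup.mem_comap.mpr ?_ <;> rw [AddMonoidHom.mk'_apply]
          · exact AddSubgroup.subset_closure (Or.inl ((I.ideal i).comp_mem_left f hg))
          · refine AddSubgroup.subset_closure (Or.inr ⟨A, B, hA, hB, (M.cat i).comp f a, j, b, hj, ?_⟩)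
            exact ((M.cat i).assoc f a _).symm
        exact AddSubgroup.mem_comap.mp (h hg)
      comp_mem_right := by
        intro X Y Z f g hf
        have h : AddSubgroup.closure (genSet S hS I J i X Y) ≤
            (AddSubgroup.closure (genSet S hS I J i X Z)).comap
              (AddMonoidHom.mk' (fun f => (M.cat i).comp f g)
                (fun a b => (M.cat i).add_comp a b g)) := by
          rw [AddSubgroup.closure_le]
          rintro f (hf | ⟨A, B, hA, hB, a, j, b, hj, rfl⟩) <;>
            refine AddSubgroup.mem_comap.mpr ?_ <;> rw [AddMonoidHom.mk'_apply]
          · exact AddSubgroup.subset_closure (Or.inl ((I.ideal i).comp_mem_right g hf))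
          · refine AddSubgroup.subset_closure (Or.inr ⟨A, B, hA, hB, a, j, (M.cat i).comp b g, hj, ?_⟩)
            rw [(M.cat i).assoc, (M.cat i).assoc]
        exact AddSubgroup.mem_comap.mp (h hf)
      d_mem := by
        intro X Y f hf
        have h : AddSubgroup.closure (genSet S hS I J i X Y) ≤
            (AddSubgroup.closure (genSet S hS I J i X Y)).comap
              (AddMonoidHom.mk' (fun f => (M.cat i).d f)
                (fun a b => (M.cat i).d_add a b)) := by
          rw [AddSubgroup.closure_le]
          rintro f (hf | ⟨A, B, hA, hB, a, j, b, hj, rfl⟩) <;>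
            refine AddSubgroup.mem_comap.mpr ?_ <;> rw [AddMonoidHom.mk'_apply]
          · exact AddSubgroup.subset_closure (Or.inl ((I.ideal i).d_mem hf))
          · rw [(M.cat i).leibniz, (M.cat i).leibniz, (M.cat i).comp_add]
            refine add_mem (AddSubgroup.subset_closure
                (Or.inr ⟨A, B, hA, hB, (M.cat i).d a, j, b, hj, rfl⟩))
              (add_mem (AddSubgroup.subset_closure
                (Or.inr ⟨A, B, hA, hB, a, (M.cat i).d j, b, (J.ideal i).d_mem hj, rfl⟩))
                (AddSubgroup.subset_closure
                  (Or.inr ⟨A, B, hA, hB, a, j, (M.cat i).d b, hj, rfl⟩)))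
        exact AddSubgroup.mem_comap.mp (h hf) }
  act_mem := by
    intro i j F X Y f hf
    have h : AddSubgroup.closure (genSet S hS I J i X Y) ≤
        (AddSubgroup.closure (genSet S hS I J j ((M.act F).obj X) ((M.act F).obj Y))).comap
          (AddMonoidHom.mk' (fun f => (M.act F).map f)
            (fun a b => (M.act F).map_add a b)) := by
      rw [AddSubgroup.closure_le]
      rintro f (hf | ⟨A, B, hA, hB, a, c, b, hc, rfl⟩) <;>
        refine AddSubgroup.mem_comap.mpr ?_ <;> rw [AddMonoidHom.mk'_apply]
      · exact AddSubgroup.subset_closure (Or.inl (I.act_mem F hf))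
      · rw [(M.act F).map_comp, (M.act F).map_comp]
        exact AddSubgroup.subset_closure
          (Or.inr ⟨(M.act F).obj A, (M.act F).obj B, hS F A hA, hS F B hB,
            (M.act F).map a, (M.act F).map c, (M.act F).map b, J.act_mem F hc, rfl⟩)
    exact AddSubgroup.mem_comap.mp (h hf)

theorem I_le_ext : I.le (extIdeal S hS I J) :=
  fun i X Y f hf => AddSubgroup.subset_closure (Or.inl hf)

theorem J_le_ext_restrict : ∀ (i : ι) (X Y : ((M.Sub S hS).cat i).Obj)
    (f : ((M.Sub S hS).cat i).Hom X Y), f ∈ (J.ideal i).carrier X Y →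
    f ∈ ((extIdeal S hS I J).ideal i).carrier X.1 Y.1 := by
  intro i X Y f hf
  refine AddSubgroup.subset_closure (Or.inr ⟨X.1, Y.1, X.2, Y.2,
    (M.cat i).id X.1, f, (M.cat i).id Y.1, hf, ?_⟩)
  exact (((M.cat i).id_comp _).trans ((M.cat i).comp_id f)).symm

theorem ext_restrict_le_J (hTJ : (RepIdeal.restrict S hS I).le J) :
    ∀ (i : ι) (X Y : ((M.Sub S hS).cat i).Obj)
    (f : ((M.Sub S hS).cat i).Hom X Y),
    f ∈ ((extIdeal S hS I J).ideal i).carrier X.1 Y.1 →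
    f ∈ (J.ideal i).carrier X Y := by
  intro i X Y f hf
  have h : AddSubgroup.closure (genSet S hS I J i X.1 Y.1) ≤
      (J.ideal i).carrier X Y := by
    refine (AddSubgroup.closure_le _).mpr ?_
    rintro f (hf | ⟨A, B, hA, hB, a, c, b, hc, rfl⟩)
    · exact hTJ i X Y hf
    · exact (J.ideal i).comp_mem_left (X := X) (Y := ⟨A, hA⟩) (Z := Y) a
        ((J.ideal i).comp_mem_right (X := ⟨A, hA⟩) (Y := ⟨B, hB⟩) (Z := Y) b hc)
  exact h hf

end Extension

/-- Let `L ⪯_L L'` be weak left cells, so that `R_{L'}^⪯` is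
a full pretriangulated 2-subrepresentation of `R_L^⪯`.  Here `M` plays the
role of `R_L^⪯` and the closed family of objects `S` that of `R_{L'}^⪯`.  If
`I` is a maximal dg ideal of `R_L^⪯`, then the restriction of `I` to
`R_{L'}^⪯` is either a maximal dg ideal of `R_{L'}^⪯` or all of `R_{L'}^⪯`. -/
theorem restriction_of_maximal_ideal_max_or_top
    {ι : Type} {Mor : ι → ι → Type}
    (M : TwoRep ι Mor) (S : ∀ i, Set (M.cat i).Obj) (hS : ClosedUnderAct M S)
    (I : RepIdeal M) (hI : I.IsMaximal) :
    (RepIdeal.restrict S hS I).IsMaximal ∨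
      (∀ (i : ι) (X Y : ((M.Sub S hS).cat i).Obj),
        ((RepIdeal.restrict S hS I).ideal i).carrier X Y = ⊤) := by
  by_cases htop : ∀ (i : ι) (X Y : ((M.Sub S hS).cat i).Obj),
      ((RepIdeal.restrict S hS I).ideal i).carrier X Y = ⊤
  · exact Or.inr htop
  · left
    refine ⟨htop, ?_⟩
    intro J hJ hTJ
    by_cases hK : (extIdeal S hS I J).Proper
    · have hKI := hI.2 _ hK (I_le_ext S hS I J)
      intro i X Y f hf
      exact hKI i X.1 Y.1 (J_le_ext_restrict S hS I J i X Y f hf)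
    · exfalso
      apply hJ
      have hKtop := not_not.mp hK
      intro i X Y
      refine eq_top_iff.mpr fun f _ => ?_
      refine ext_restrict_le_J S hS I J hTJ i X Y f ?_
      rw [hKtop i X.1 Y.1]
      trivial
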